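/- For all integers N ≥ 1, k ≥ 1, every i ∈ {1,…,N} and every integer v with 0 ≤ v ≤ k/2, in the Pólya urn model with N colours and k draws one has P(X_i ≥ v) ≤ 1 − ((N−1)/(k+N))·v·exp(−2·N·v/k). -/

import Mathlib

attribute [local instance] Classical.propDecidable

/-- The set of colour-count vectors of the Pólya urn with `N` colours and `k` draws:
all `(v_1, …, v_N) ∈ ℤ_{≥0}^N` with `v_1 + ⋯ + v_N = k`.  The colour-count vector
`(X_1, …, X_N)` is uniformly distributed on this set. -/
def urnSet (N k : ℕ) : Finset (Fin N → ℕ) :=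
  (Fintype.piFinset fun _ => Finset.range (k + 1)).filter fun v => ∑ i, v i = k

lemma mem_urnSet {N k : ℕ} {x : Fin N → ℕ} : x ∈ urnSet N k ↔ ∑ i, x i = k := by
  simp only [urnSet, Finset.mem_filter, Fintype.mem_piFinset, Finset.mem_range]
  refine ⟨fun h => h.2, fun h => ⟨fun i => ?_, h⟩⟩
  have := Finset.single_le_sum (f := x) (fun j _ => Nat.zero_le _) (Finset.mem_univ i)
  omega

lemma card_urnSet (N k : ℕ) : (urnSet N k).card = Nat.multichoose N k := by
  have h1 : urnSet N k = Finset.piAntidiag (Finset.univ : Finset (Fin N)) k := by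
    ext x
    simp [mem_urnSet, Finset.mem_piAntidiag]
  rw [h1, ← Finset.map_sym_eq_piAntidiag, Finset.card_map, Finset.sym_univ]
  simp [Finset.card_univ, Sym.card_sym_eq_multichoose]

lemma card_filter_ge (N k v : ℕ) (i : Fin N) (hv : v ≤ k) :
    ((urnSet N k).filter fun x => v ≤ x i).card = (urnSet N (k - v)).card := by
  apply Finset.card_bij' (fun x _ => Function.update x i (x i - v))
    (fun y _ => Function.update y i (y i + v))
  · intro x hx
    simp only [Finset.mem_filter] at hx
    funext j
    rcases eq_or_ne j i with rfl | hj
    · simp [Function.update_self]; omega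
    · simp [Function.update_of_ne hj]
  · intro y hy
    funext j
    rcases eq_or_ne j i with rfl | hj
    · simp [Function.update_self]
    · simp [Function.update_of_ne hj]
  · intro x hx
    simp only [Finset.mem_filter] at hx
    obtain ⟨hx1, hx2⟩ := hx
    rw [mem_urnSet] at hx1 ⊢
    rw [Finset.sum_update_of_mem (Finset.mem_univ i)]
    rw [Finset.sum_eq_sum_sdiff_singleton_add (Finset.mem_univ i)] at hx1
    omega
  · intro y hy
    rw [mem_urnSet] at hy
    refine Finset.mem_filter.2 ⟨?_, ?_⟩
    · rw [mem_urnSet, Finset.sum_update_of_mem (Finset.mem_univ i)]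
      rw [Finset.sum_eq_sum_sdiff_singleton_add (Finset.mem_univ i)] at hy
      omega
    · simp [Function.update_self]


lemma choose_diff_ge (j k : ℕ) : ∀ v : ℕ, v ≤ k →
    (k - v + (j+1)).choose (j+1) + v * (k - v + (j+1)).choose j ≤ (k + (j+1)).choose (j+1) := by
  intro v
  induction v with
  | zero => simp
  | succ v ih =>
    intro hv
    have ih' := ih (by omega)
    have hm : k - v + (j+1) = (k - (v+1) + (j+1)) + 1 := by omega
    have hp : ((k - (v+1) + (j+1)) + 1).choose (j+1)
        = (k - (v+1) + (j+1)).choose j + (k - (v+1) + (j+1)).choose (j+1) :=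
      Nat.choose_succ_succ _ _
    have hmono : (k - (v+1) + (j+1)).choose j ≤ (k - v + (j+1)).choose j :=
      Nat.choose_le_choose _ (by omega)
    rw [hm] at ih' hmono
    rw [hp] at ih'
    have h5 := Nat.mul_le_mul_left v hmono
    have hx : (v+1) * (k - (v+1) + (j+1)).choose j
        = v * (k - (v+1) + (j+1)).choose j + (k - (v+1) + (j+1)).choose j := by ring
    omega

lemma key_ineq (k v : ℕ) : ∀ j : ℕ,
    (j+1) * (k + (j+1)).choose (j+1) * (k - v)^j
      ≤ (k + (j+1)) * (k - v + (j+1)).choose j * k^j := by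
  intro j
  induction j with
  | zero => simp [Nat.choose_one_right]
  | succ j ih =>
    set w := k - v with hw
    have hwk : w ≤ k := Nat.sub_le _ _
    have h1 : (k + (j+1) + 1) * (k + (j+1)).choose (j+1)
        = (k + (j+1) + 1).choose (j+1+1) * (j+1+1) := Nat.add_one_mul_choose_eq _ _
    have h2 : (w + (j+1) + 1) * (w + (j+1)).choose j
        = (w + (j+1) + 1).choose (j+1) * (j+1) := Nat.add_one_mul_choose_eq _ _
    have e1 : k + (j+1+1) = k + (j+1) + 1 := by omega
    have e2 : w + (j+1+1) = w + (j+1) + 1 := by omega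
    rw [e1, e2]
    apply Nat.le_of_mul_le_mul_left _ (Nat.succ_pos j)
    calc (j+1) * ((j+1+1) * (k + (j+1) + 1).choose (j+1+1) * w^(j+1))
        = ((k + (j+1) + 1).choose (j+1+1) * (j+1+1)) * ((j+1) * w^(j+1)) := by ring
      _ = ((k + (j+1) + 1) * (k + (j+1)).choose (j+1)) * ((j+1) * w^(j+1)) := by rw [h1]
      _ = (k + (j+1) + 1) * ((j+1) * (k + (j+1)).choose (j+1) * w^j) * w := by ring
      _ ≤ (k + (j+1) + 1) * ((k + (j+1)) * (w + (j+1)).choose j * k^j) * w :=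
          Nat.mul_le_mul (Nat.mul_le_mul_left _ ih) le_rfl
      _ = ((k + (j+1)) * w) * ((k + (j+1) + 1) * (w + (j+1)).choose j * k^j) := by ring
      _ ≤ ((w + (j+1) + 1) * k) * ((k + (j+1) + 1) * (w + (j+1)).choose j * k^j) := by
          apply Nat.mul_le_mul_right
          nlinarith [hwk]
      _ = ((w + (j+1) + 1) * (w + (j+1)).choose j) * ((k + (j+1) + 1) * k^j * k) := by ring
      _ = ((w + (j+1) + 1).choose (j+1) * (j+1)) * ((k + (j+1) + 1) * k^j * k) := by rw [h2]
      _ = (j+1) * ((k + (j+1) + 1) * (w + (j+1) + 1).choose (j+1) * k^(j+1)) := by ring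

lemma exp_neg_two_le {x : ℝ} (h0 : 0 ≤ x) (h2 : x ≤ 1/2) : Real.exp (-(2*x)) ≤ 1 - x := by
  have hx1 : (0:ℝ) < 1 - x := by linarith
  have he : (1 - x)⁻¹ ≤ Real.exp (2*x) := by
    have h3 : (1 - x)⁻¹ ≤ 1 + 2*x := by
      rw [inv_le_iff_one_le_mul₀ hx1]
      nlinarith
    linarith [Real.add_one_le_exp (2*x)]
  rw [Real.exp_neg]
  calc (Real.exp (2*x))⁻¹ ≤ ((1-x)⁻¹)⁻¹ := by
        apply inv_anti₀ (by positivity) he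
    _ = 1 - x := inv_inv _


/-- The probability, in the Pólya urn model with `N` colours and `k` draws, that the
colour-count vector `(X_1, …, X_N)` satisfies the predicate `p`, expressed as a
counting ratio over the uniform distribution on `urnSet N k`. -/
noncomputable def urnProb (N k : ℕ) (p : (Fin N → ℕ) → Prop) : ℝ :=
  ((urnSet N k).filter p).card / (urnSet N k).card

theorem polya_upper_tail_second_bound (N k : ℕ) (hN : 1 ≤ N) (hk : 1 ≤ k) (i : Fin N)
    (v : ℕ) (hv : (v : ℝ) ≤ (k : ℝ) / 2) :
    urnProb N k (fun x => v ≤ x i) ≤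
      1 - ((N : ℝ) - 1) / ((k : ℝ) + N) * v * Real.exp (-(2 * (N : ℝ) * v) / k) := by
  obtain ⟨n, rfl⟩ : ∃ n, N = n + 1 := ⟨N - 1, by omega⟩
  have hk0 : (0:ℝ) < k := by exact_mod_cast hk
  have hv2 : 2 * v ≤ k := by
    have : (2 * v : ℝ) ≤ k := by push_cast; linarith
    exact_mod_cast this
  have hvk : v ≤ k := by omega
  have hT : (urnSet (n+1) k).card = (k + n).choose n := by
    rw [card_urnSet, Nat.multichoose_eq]
    rw [show n + 1 + k - 1 = k + n from by omega, Nat.choose_symm_add]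
  have hS : ((urnSet (n+1) k).filter fun x => v ≤ x i).card = (k - v + n).choose n := by
    rw [card_filter_ge _ _ _ _ hvk, card_urnSet, Nat.multichoose_eq]
    rw [show n + 1 + (k - v) - 1 = (k - v) + n from by omega, Nat.choose_symm_add]
  rw [urnProb, hT]
  rw [Finset.filter_congr_decidable (urnSet (n+1) k) (fun x => v ≤ x i) (fun x => Classical.propDecidable _), hS]
  rcases Nat.eq_zero_or_pos n with rfl | hn
  · simp only [Nat.choose_zero_right, Nat.cast_one]
    push_cast
    norm_num
  obtain ⟨j, rfl⟩ : ∃ j, n = j + 1 := ⟨n - 1, (Nat.sub_add_cancel hn).symm⟩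
  set T : ℝ := ((k + (j+1)).choose (j+1) : ℝ) with hTdef
  set S : ℝ := ((k - v + (j+1)).choose (j+1) : ℝ) with hSdef
  set C2 : ℝ := ((k - v + (j+1)).choose j : ℝ) with hC2def
  have hT0 : (0:ℝ) < T := by
    rw [hTdef]
    exact_mod_cast Nat.choose_pos (Nat.le_add_left (j+1) k)
  have hC20 : (0:ℝ) ≤ C2 := by positivity
  have f1 : S + v * C2 ≤ T := by
    rw [hTdef, hSdef, hC2def]
    exact_mod_cast choose_diff_ge j k v hvk
  have hkv : ((k - v : ℕ) : ℝ) = (k : ℝ) - v := by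
    rw [Nat.cast_sub hvk]
  have f2 : ((j:ℝ)+1) * T * ((k:ℝ) - v)^j ≤ ((k:ℝ) + (j+1)) * C2 * (k:ℝ)^j := by
    have h := key_ineq k v j
    have h' : (((j+1) * (k + (j+1)).choose (j+1) * (k - v)^j : ℕ) : ℝ)
        ≤ (((k + (j+1)) * (k - v + (j+1)).choose j * k^j : ℕ) : ℝ) := by exact_mod_cast h
    push_cast [hkv] at h'
    convert h' using 1 <;> ring
  -- exponential bound
  have hbase : Real.exp (-(2 * ((v:ℝ)/k))) ≤ ((k:ℝ) - v) / k := by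
    have h1 : Real.exp (-(2 * ((v:ℝ)/k))) ≤ 1 - (v:ℝ)/k := by
      apply exp_neg_two_le (by positivity)
      rw [div_le_div_iff₀ hk0 (by norm_num : (0:ℝ) < 2)]
      linarith
    have h2 : 1 - (v:ℝ)/k = ((k:ℝ) - v)/k := by field_simp
    linarith [h2 ▸ h1]
  have hE : Real.exp (-(2 * ((j:ℝ)+1+1) * v) / k) ≤ (((k:ℝ) - v) / k)^j := by
    calc Real.exp (-(2 * ((j:ℝ)+1+1) * v) / k)
        ≤ Real.exp ((j:ℝ) * (-(2 * ((v:ℝ)/k)))) := by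
          apply Real.exp_le_exp.mpr
          have hv0 : (0:ℝ) ≤ (v:ℝ) := Nat.cast_nonneg v
          have hj0 : (0:ℝ) ≤ (j:ℝ) := Nat.cast_nonneg j
          have heq : (j:ℝ) * (-(2 * ((v:ℝ)/k))) = -(2 * (j:ℝ) * v) / k := by
            field_simp
          rw [heq, div_le_div_iff₀ hk0 hk0]
          nlinarith [mul_nonneg hv0 hk0.le]
      _ = Real.exp (-(2 * ((v:ℝ)/k)))^j := by
          rw [← Real.exp_nat_mul]
      _ ≤ (((k:ℝ) - v) / k)^j := by
          apply pow_le_pow_left₀ (Real.exp_nonneg _) hbase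
  have hratio : ((j:ℝ)+1) * T * (((k:ℝ) - v)/k)^j ≤ ((k:ℝ) + j + 1) * C2 := by
    rw [div_pow, ← mul_div_assoc, div_le_iff₀ (by positivity : (0:ℝ) < (k:ℝ)^j)]
    calc ((j:ℝ)+1) * T * ((k:ℝ) - v)^j ≤ ((k:ℝ) + (j+1)) * C2 * (k:ℝ)^j := f2
      _ = ((k:ℝ) + j + 1) * C2 * (k:ℝ)^j := by ring
  -- main inequality
  have main : ((j:ℝ)+1+1 - 1) / ((k:ℝ) + ((j:ℝ)+1+1)) * v
        * Real.exp (-(2 * ((j:ℝ)+1+1) * v) / k) * T ≤ v * C2 := by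
    have hTnn : (0:ℝ) ≤ T := le_of_lt hT0
    have hEnn : (0:ℝ) ≤ Real.exp (-(2 * ((j:ℝ)+1+1) * v) / k) := Real.exp_nonneg _
    calc ((j:ℝ)+1+1 - 1) / ((k:ℝ) + ((j:ℝ)+1+1)) * v
          * Real.exp (-(2 * ((j:ℝ)+1+1) * v) / k) * T
        ≤ ((j:ℝ)+1) / ((k:ℝ) + j + 1) * v * (((k:ℝ) - v) / k)^j * T := by
          have e1 : ((j:ℝ)+1+1 - 1) = (j:ℝ)+1 := by ring
          rw [e1]
          have hv0 : (0:ℝ) ≤ v := Nat.cast_nonneg v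
          have c1 : ((j:ℝ)+1)/((k:ℝ)+((j:ℝ)+1+1)) ≤ ((j:ℝ)+1)/((k:ℝ)+j+1) := by
            rw [div_le_div_iff₀ (by positivity) (by positivity)]
            nlinarith
          have c2 : ((j:ℝ)+1)/((k:ℝ)+((j:ℝ)+1+1)) * v ≤ ((j:ℝ)+1)/((k:ℝ)+j+1) * v :=
            mul_le_mul_of_nonneg_right c1 hv0
          have c3 := mul_le_mul c2 hE hEnn (by positivity)
          exact mul_le_mul_of_nonneg_right c3 hTnn
      _ = v * (((j:ℝ)+1) * T * (((k:ℝ) - v)/k)^j) / ((k:ℝ) + j + 1) := by ring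
      _ ≤ v * (((k:ℝ) + j + 1) * C2) / ((k:ℝ) + j + 1) := by
          rw [div_le_div_iff₀ (by positivity) (by positivity)]
          exact mul_le_mul_of_nonneg_right
            (mul_le_mul_of_nonneg_left hratio (Nat.cast_nonneg v)) (by positivity)
      _ = v * C2 := by
          field_simp
  rw [div_le_iff₀ hT0]
  push_cast
  push_cast at main
  nlinarith [f1, main, hT0]
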